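/- Let S and T be sets and let Φ : S × T → ℂ be given by Φ(s,t) = ⟨x_s, y_t⟩ for families of vectors {x_s} in a Hilbert space H indexed by S and {y_t} in H indexed by T, with sup_s ‖x_s‖ ≤ C₁ and sup_t ‖y_t‖ ≤ C₂. Then for every finitely supported matrix a : S × T → ℂ, the operator norm of the Schur (entrywise) product {Φ(s,t)a(s,t)} as an operator from ℓ²(T) to ℓ²(S) is at most C₁·C₂ times the operator norm of {a(s,t)}. -/

import Mathlib

/-!
On the finitely many columns `t` where `a` lives, the vectors `y t` span a finite-dimensional
subspace; expanding in an orthonormal basis `(e i)` of it gives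
`Φ (s, t) = ∑ i, conj (u i s) * v i t` with `u i s = ⟪e i, x s⟫` and `v i t = ⟪e i, y t⟫`.
So the pairing of the Schur product with `f, g` is the sum over `i` of the pairings of `a` with
`v i * f, u i * g`. Each is at most `‖a‖ ‖v i * f‖ ‖u i * g‖`, and Cauchy–Schwarz in `i` together
with Bessel's inequality `∑ i, ‖v i t‖ ^ 2 ≤ ‖y t‖ ^ 2 ≤ C₂ ^ 2` (likewise for `u`) gives the
factor `C₁ * C₂`.
-/

open MeasureTheory

/-- Operator norm (from `ℓ²(T)` to `ℓ²(S)`) of a matrix `a : S × T → ℂ`, expressed as the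
supremum of `|⟨Af, g⟩|` over `f`, `g` in the unit balls of `ℓ²(T)` and `ℓ²(S)`. -/
noncomputable def opNormFS {S T : Type*} (a : S × T → ℂ) : ℝ :=
  sSup {r : ℝ | ∃ f : T → ℂ, ∃ g : S → ℂ,
    Summable (fun t => ‖f t‖ ^ 2) ∧ Summable (fun s => ‖g s‖ ^ 2) ∧
    (∑' t, ‖f t‖ ^ 2) ≤ 1 ∧ (∑' s, ‖g s‖ ^ 2) ≤ 1 ∧
    r = ‖∑' p : S × T, a p * f p.2 * (starRingEnd ℂ) (g p.1)‖}

open Finset ComplexConjugate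

section SquareSummable

variable {ι E : Type*} [NormedAddCommGroup E]

lemma norm_le_one_of_tsum_norm_sq_le_one {f : ι → E} (hf : Summable fun i => ‖f i‖ ^ 2)
    (hf1 : ∑' i, ‖f i‖ ^ 2 ≤ 1) (i : ι) : ‖f i‖ ≤ 1 := by
  have : ‖f i‖ ^ 2 ≤ 1 := (hf.le_tsum i fun j _ => sq_nonneg _).trans hf1
  nlinarith [norm_nonneg (f i)]

lemma eq_zero_of_sqrt_tsum_norm_sq_eq_zero {f : ι → E} (hf : Summable fun i => ‖f i‖ ^ 2)
    (h : √(∑' i, ‖f i‖ ^ 2) = 0) : f = 0 := by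
  have hsum : ∑' i, ‖f i‖ ^ 2 = 0 :=
    le_antisymm (Real.sqrt_eq_zero'.1 h) (tsum_nonneg fun _ => sq_nonneg _)
  have := (hasSum_zero_iff_of_nonneg fun i => sq_nonneg ‖f i‖).1 (hsum ▸ hf.hasSum)
  funext i
  simpa using congrFun this i

lemma summable_norm_sq_smul {𝕜 : Type*} [NormedField 𝕜] [NormedSpace 𝕜 E] (c : 𝕜) {f : ι → E}
    (hf : Summable fun i => ‖f i‖ ^ 2) : Summable fun i => ‖(c • f) i‖ ^ 2 := by
  simpa only [Pi.smul_apply, norm_smul, mul_pow] using hf.mul_left (‖c‖ ^ 2)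

lemma tsum_norm_sq_smul {𝕜 : Type*} [NormedField 𝕜] [NormedSpace 𝕜 E] (c : 𝕜) (f : ι → E) :
    ∑' i, ‖(c • f) i‖ ^ 2 = ‖c‖ ^ 2 * ∑' i, ‖f i‖ ^ 2 := by
  simp only [Pi.smul_apply, norm_smul, mul_pow, tsum_mul_left]

lemma summable_norm_sq_mul {f v : ι → ℂ} {C : ℝ} (hf : Summable fun i => ‖f i‖ ^ 2)
    (hv : ∀ i, ‖v i‖ ^ 2 ≤ C ^ 2) : Summable fun i => ‖v i * f i‖ ^ 2 :=
  (hf.mul_left (C ^ 2)).of_nonneg_of_le (fun _ => sq_nonneg _) fun i => by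
    rw [norm_mul, mul_pow]; exact mul_le_mul_of_nonneg_right (hv i) (sq_nonneg _)

lemma sum_tsum_norm_sq_mul_le {κ : Type*} [Fintype κ] {f : ι → ℂ} {v : κ → ι → ℂ} {C : ℝ}
    (hf : Summable fun i => ‖f i‖ ^ 2) (hvf : ∀ k, Summable fun i => ‖v k i * f i‖ ^ 2)
    (hv : ∀ i, ∑ k, ‖v k i‖ ^ 2 ≤ C ^ 2) :
    ∑ k, ∑' i, ‖v k i * f i‖ ^ 2 ≤ C ^ 2 * ∑' i, ‖f i‖ ^ 2 := by
  rw [← Summable.tsum_finsetSum fun k _ => hvf k, ← tsum_mul_left]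
  refine Summable.tsum_le_tsum (fun i => ?_) (summable_sum fun k _ => hvf k) (hf.mul_left _)
  simp only [norm_mul, mul_pow, ← sum_mul]
  exact mul_le_mul_of_nonneg_right (hv i) (sq_nonneg _)

lemma tsum_norm_sq_smul_inv_sqrt {f : ι → ℂ} (hpos : 0 < √(∑' i, ‖f i‖ ^ 2)) :
    ∑' i, ‖((√(∑' i, ‖f i‖ ^ 2) : ℂ)⁻¹ • f) i‖ ^ 2 = 1 := by
  rw [tsum_norm_sq_smul, norm_inv, Complex.norm_real, Real.norm_of_nonneg hpos.le, inv_pow,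
    Real.sq_sqrt (tsum_nonneg fun _ => sq_nonneg _), inv_mul_cancel₀]
  exact (Real.sqrt_pos.1 hpos).ne'

end SquareSummable

section MatrixPairing

variable {S T : Type*}

noncomputable def matrixPairing (a : S × T → ℂ) (f : T → ℂ) (g : S → ℂ) : ℂ :=
  ∑' p : S × T, a p * f p.2 * conj (g p.1)

lemma matrixPairing_eq_sum {a : S × T → ℂ} {A : Finset (S × T)}
    (ha : Function.support a ⊆ A) (f : T → ℂ) (g : S → ℂ) :
    matrixPairing a f g = ∑ p ∈ A, a p * f p.2 * conj (g p.1) :=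
  tsum_eq_sum fun p hp => by simp [Function.notMem_support.1 (mt (@ha p) hp)]

lemma matrixPairing_smul (a : S × T → ℂ) (c d : ℂ) (f : T → ℂ) (g : S → ℂ) :
    matrixPairing a (c • f) (d • g) = c * conj d * matrixPairing a f g := by
  rw [matrixPairing, matrixPairing, ← tsum_mul_left]
  congr 1 with p
  simp only [Pi.smul_apply, smul_eq_mul, map_mul]
  ring

lemma le_opNormFS {a : S × T → ℂ} (ha : (Function.support a).Finite) {f : T → ℂ} {g : S → ℂ}
    (hf : Summable fun t => ‖f t‖ ^ 2) (hg : Summable fun s => ‖g s‖ ^ 2)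
    (hf1 : ∑' t, ‖f t‖ ^ 2 ≤ 1) (hg1 : ∑' s, ‖g s‖ ^ 2 ≤ 1) :
    ‖matrixPairing a f g‖ ≤ opNormFS a := by
  refine le_csSup ⟨∑ p ∈ ha.toFinset, ‖a p‖, ?_⟩ ⟨f, g, hf, hg, hf1, hg1, rfl⟩
  rintro r ⟨f, g, hf, hg, hf1, hg1, rfl⟩
  rw [← matrixPairing, matrixPairing_eq_sum ha.coe_toFinset.ge]
  refine (norm_sum_le _ _).trans (sum_le_sum fun p _ => ?_)
  rw [norm_mul, norm_mul, RCLike.norm_conj]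
  have := mul_le_one₀ (norm_le_one_of_tsum_norm_sq_le_one hf hf1 p.2) (norm_nonneg _)
    (norm_le_one_of_tsum_norm_sq_le_one hg hg1 p.1)
  simpa [mul_assoc] using mul_le_mul_of_nonneg_left this (norm_nonneg (a p))

lemma opNormFS_nonneg {a : S × T → ℂ} (ha : (Function.support a).Finite) : 0 ≤ opNormFS a := by
  simpa [matrixPairing] using le_opNormFS (f := 0) (g := 0) ha (by simp [summable_zero])
    (by simp [summable_zero]) (by simp) (by simp)

lemma opNormFS_le {a : S × T → ℂ} {M : ℝ} (hM : 0 ≤ M)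
    (h : ∀ (f : T → ℂ) (g : S → ℂ), Summable (fun t => ‖f t‖ ^ 2) →
      Summable (fun s => ‖g s‖ ^ 2) → ∑' t, ‖f t‖ ^ 2 ≤ 1 → ∑' s, ‖g s‖ ^ 2 ≤ 1 →
      ‖matrixPairing a f g‖ ≤ M) :
    opNormFS a ≤ M :=
  Real.sSup_le (by rintro r ⟨f, g, hf, hg, hf1, hg1, rfl⟩; exact h f g hf hg hf1 hg1) hM

lemma opNormFS_eq_zero_of_isEmpty [IsEmpty (S × T)] (a : S × T → ℂ) : opNormFS a = 0 :=
  le_antisymm (opNormFS_le le_rfl fun _ _ _ _ _ _ => by simp [matrixPairing])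
    (opNormFS_nonneg (Set.toFinite _))

lemma norm_matrixPairing_le {a : S × T → ℂ} (ha : (Function.support a).Finite)
    {f : T → ℂ} {g : S → ℂ}
    (hf : Summable fun t => ‖f t‖ ^ 2) (hg : Summable fun s => ‖g s‖ ^ 2) :
    ‖matrixPairing a f g‖ ≤ opNormFS a * √(∑' t, ‖f t‖ ^ 2) * √(∑' s, ‖g s‖ ^ 2) := by
  rcases (Real.sqrt_nonneg (∑' t, ‖f t‖ ^ 2)).eq_or_lt with hα | hα
  · simp [eq_zero_of_sqrt_tsum_norm_sq_eq_zero hf hα.symm, matrixPairing]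
  rcases (Real.sqrt_nonneg (∑' s, ‖g s‖ ^ 2)).eq_or_lt with hβ | hβ
  · simp [eq_zero_of_sqrt_tsum_norm_sq_eq_zero hg hβ.symm, matrixPairing]
  generalize hα_def : √(∑' t, ‖f t‖ ^ 2) = α at hα
  generalize hβ_def : √(∑' s, ‖g s‖ ^ 2) = β at hβ
  calc ‖matrixPairing a f g‖
      = α * β * ‖matrixPairing a ((α : ℂ)⁻¹ • f) ((β : ℂ)⁻¹ • g)‖ := by
        conv_lhs => rw [← smul_inv_smul₀ (a := (α : ℂ)) (by exact_mod_cast hα.ne') f,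
          ← smul_inv_smul₀ (a := (β : ℂ)) (by exact_mod_cast hβ.ne') g]
        rw [matrixPairing_smul, norm_mul, norm_mul, RCLike.norm_conj, Complex.norm_real,
          Complex.norm_real, Real.norm_of_nonneg hα.le, Real.norm_of_nonneg hβ.le]
    _ ≤ α * β * opNormFS a := by
        gcongr
        subst hα_def hβ_def
        exact le_opNormFS ha (summable_norm_sq_smul _ hf) (summable_norm_sq_smul _ hg)
          (tsum_norm_sq_smul_inv_sqrt hα).le (tsum_norm_sq_smul_inv_sqrt hβ).le
    _ = opNormFS a * α * β := by ring

lemma opNormFS_mul_le_of_factorization {ι : Type*} [Fintype ι] {a : S × T → ℂ}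
    (ha : (Function.support a).Finite) {Φ : S × T → ℂ} (u : ι → S → ℂ) (v : ι → T → ℂ)
    {C₁ C₂ : ℝ} (hC₁ : 0 ≤ C₁) (hC₂ : 0 ≤ C₂)
    (hu : ∀ s, ∑ i, ‖u i s‖ ^ 2 ≤ C₁ ^ 2) (hv : ∀ t, ∑ i, ‖v i t‖ ^ 2 ≤ C₂ ^ 2)
    (hΦ : ∀ p ∈ Function.support a, Φ p = ∑ i, conj (u i p.1) * v i p.2) :
    opNormFS (fun p => Φ p * a p) ≤ C₁ * C₂ * opNormFS a := by
  have hN := opNormFS_nonneg ha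
  refine opNormFS_le (by positivity) fun f g hf hg hf1 hg1 => ?_
  have hA : Function.support a ⊆ ha.toFinset := ha.coe_toFinset.ge
  have hsplit : matrixPairing (fun p => Φ p * a p) f g =
      ∑ i, matrixPairing a (fun t => v i t * f t) (fun s => u i s * g s) := by
    simp only [matrixPairing_eq_sum hA,
      matrixPairing_eq_sum ((Function.support_mul_subset_right _ _).trans hA)]
    rw [sum_comm]
    refine sum_congr rfl fun p hp => ?_
    rw [hΦ p (by simpa using hp), sum_mul, sum_mul, sum_mul]
    refine sum_congr rfl fun i _ => ?_
    rw [map_mul]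
    ring
  have hvf : ∀ i, Summable fun t => ‖v i t * f t‖ ^ 2 := fun i => summable_norm_sq_mul hf
    fun t => (single_le_sum (fun j _ => sq_nonneg ‖v j t‖) (mem_univ i)).trans (hv t)
  have hug : ∀ i, Summable fun s => ‖u i s * g s‖ ^ 2 := fun i => summable_norm_sq_mul hg
    fun s => (single_le_sum (fun j _ => sq_nonneg ‖u j s‖) (mem_univ i)).trans (hu s)
  have hvf_le : √(∑ i, ∑' t, ‖v i t * f t‖ ^ 2) ≤ C₂ :=
    Real.sqrt_le_iff.2 ⟨hC₂, (sum_tsum_norm_sq_mul_le hf hvf hv).trans (by nlinarith)⟩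
  have hug_le : √(∑ i, ∑' s, ‖u i s * g s‖ ^ 2) ≤ C₁ :=
    Real.sqrt_le_iff.2 ⟨hC₁, (sum_tsum_norm_sq_mul_le hg hug hu).trans (by nlinarith)⟩
  calc ‖matrixPairing (fun p => Φ p * a p) f g‖
      ≤ ∑ i, ‖matrixPairing a (fun t => v i t * f t) (fun s => u i s * g s)‖ :=
        hsplit ▸ norm_sum_le _ _
    _ ≤ ∑ i, opNormFS a * (√(∑' t, ‖v i t * f t‖ ^ 2) * √(∑' s, ‖u i s * g s‖ ^ 2)) :=
        sum_le_sum fun i _ =>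
          (norm_matrixPairing_le ha (hvf i) (hug i)).trans_eq (mul_assoc _ _ _)
    _ ≤ opNormFS a * (√(∑ i, ∑' t, ‖v i t * f t‖ ^ 2) * √(∑ i, ∑' s, ‖u i s * g s‖ ^ 2)) := by
        rw [← mul_sum]
        gcongr
        exact Real.sum_sqrt_mul_sqrt_le _ (fun _ => tsum_nonneg fun _ => sq_nonneg _)
          (fun _ => tsum_nonneg fun _ => sq_nonneg _)
    _ ≤ opNormFS a * (C₂ * C₁) := by gcongr
    _ = C₁ * C₂ * opNormFS a := by ring

end MatrixPairing

lemma OrthonormalBasis.inner_coe_right_eq_sum {𝕜 E ι : Type*} [RCLike 𝕜] [NormedAddCommGroup E]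
    [InnerProductSpace 𝕜 E] [Fintype ι] {V : Submodule 𝕜 E} (b : OrthonormalBasis ι 𝕜 V)
    (u : E) (v : V) :
    inner 𝕜 u (v : E) = ∑ i, conj (inner 𝕜 (b i : E) u) * inner 𝕜 (b i : E) (v : E) := by
  conv_lhs => rw [← b.sum_repr' v]
  simp only [Submodule.coe_sum, Submodule.coe_smul, inner_sum, inner_smul_right,
    Submodule.coe_inner, inner_conj_symm]
  exact sum_congr rfl fun i _ => mul_comm _ _

theorem stmt0_general {S T H : Type*} [NormedAddCommGroup H] [InnerProductSpace ℂ H]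
    (x : S → H) (y : T → H) (C₁ C₂ : ℝ)
    (hx : ∀ s, ‖x s‖ ≤ C₁) (hy : ∀ t, ‖y t‖ ≤ C₂)
    (Φ : S × T → ℂ) (hΦ : ∀ s t, Φ (s, t) = inner ℂ (x s) (y t))
    (a : S × T → ℂ) (ha : (Function.support a).Finite) :
    opNormFS (fun p => Φ p * a p) ≤ C₁ * C₂ * opNormFS a := by
  rcases isEmpty_or_nonempty (S × T) with hST | ⟨s₀, t₀⟩
  · simp [opNormFS_eq_zero_of_isEmpty]
  let V := Submodule.span ℂ (y '' (Prod.snd '' Function.support a))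
  have : FiniteDimensional ℂ V := FiniteDimensional.span_of_finite ℂ ((ha.image _).image _)
  let b := stdOrthonormalBasis ℂ V
  have hb : Orthonormal ℂ fun i => (b i : H) := b.orthonormal.comp_linearIsometry V.subtypeₗᵢ
  refine opNormFS_mul_le_of_factorization ha (fun i s => inner ℂ (b i : H) (x s))
    (fun i t => inner ℂ (b i : H) (y t)) ((norm_nonneg _).trans (hx s₀))
    ((norm_nonneg _).trans (hy t₀))
    (fun s => (hb.sum_inner_products_le _).trans (pow_le_pow_left₀ (norm_nonneg _) (hx s) 2))
    (fun t => (hb.sum_inner_products_le _).trans (pow_le_pow_left₀ (norm_nonneg _) (hy t) 2))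
    fun ⟨s, t⟩ hp => ?_
  have hyV : y t ∈ V := Submodule.subset_span ⟨t, ⟨(s, t), hp, rfl⟩, rfl⟩
  rw [hΦ, b.inner_coe_right_eq_sum (x s) ⟨y t, hyV⟩]

theorem stmt0 {S T H : Type*} [NormedAddCommGroup H] [InnerProductSpace ℂ H]
    [CompleteSpace H]
    (x : S → H) (y : T → H) (C₁ C₂ : ℝ)
    (hx : ∀ s, ‖x s‖ ≤ C₁) (hy : ∀ t, ‖y t‖ ≤ C₂)
    (Φ : S × T → ℂ) (hΦ : ∀ s t, Φ (s, t) = inner ℂ (x s) (y t))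
    (a : S × T → ℂ) (ha : (Function.support a).Finite) :
    opNormFS (fun p => Φ p * a p) ≤ C₁ * C₂ * opNormFS a :=
  stmt0_general x y C₁ C₂ hx hy Φ hΦ a ha
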